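/- Closed form for the weighted repeated-argument sum: for every tuple (x_0, …, x_q) of real numbers and every real τ, one has Σ_{j=0}^{q} x_j · e^{-τ[x_0, …, x_q, x_j]} = (−x_0 τ − q) · e^{-τ[x_0, …, x_q]} − τ · e^{-τ[x_1, …, x_q]} when q ≥ 1, and Σ_{j=0}^{0} x_j · e^{-τ[x_0, x_0]} = −τ x_0 e^{-τ x_0} when q = 0. -/

import Mathlib

open scoped BigOperators

/-- Complete homogeneous symmetric polynomial of degree `m` in the entries of the list `l`:
`h_m(x_0, …, x_q) = Σ_{k_0+⋯+k_q = m} x_0^{k_0}⋯x_q^{k_q}` (with `h_0 = 1`). -/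
noncomputable def hsymm (l : List ℝ) (m : ℕ) : ℝ :=
  ∑ k ∈ Finset.Nat.antidiagonalTuple l.length m, ∏ i : Fin l.length, l.get i ^ k i

/-- Divided difference of the exponential `e^{t[x_0, …, x_q]}` over the tuple given by the
list `l` (of length `q+1`), defined by its (absolutely convergent) series
`Σ_{m=0}^∞ (t^{q+m}/(q+m)!) · h_m(x_0, …, x_q)`; by convention it is `0` on the empty tuple. -/
noncomputable def dde (t : ℝ) (l : List ℝ) : ℝ :=
  if l.length = 0 then 0
  else ∑' m : ℕ, t ^ (l.length - 1 + m) / (Nat.factorial (l.length - 1 + m)) * hsymm l m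

/-- The sub-tuple `[x_a, …, x_b]` of the sequence `x`, as a list (empty if `b < a`). -/
def seg (x : ℕ → ℝ) (a b : ℕ) : List ℝ :=
  (List.range (b + 1 - a)).map (fun i => x (a + i))

/-!
Expand `e^{t[l]} = ∑ₙ cₙ tⁿ/n!` with `cₙ = h_{n-q}(l)` (`ddeCoeff`). Differentiating the generating
function `∏_{y ∈ l} (1 - yX)⁻¹` of the `h_m` gives `∑_{y ∈ l} y h_m(l, y) = (m + 1) h_{m+1}(l)`,
so the weighted sum has coefficients `(n - q) cₙ`. The factor `n` turns `∑ n cₙ tⁿ/n!` into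
`t ∑ c_{n+1} tⁿ/n!`, and for `l = (x₀, l')` the recursion `h_{m+1}(l) = x₀ h_m(l) + h_{m+1}(l')`
identifies this shifted series with `x₀ e^{t[l]} + e^{t[l']}`. For `q = 0` the list `l'` is empty and
`e^{t[x₀]} = e^{t x₀}`.
-/

open PowerSeries Finset
open scoped Nat

noncomputable def geomSeries (y : ℝ) : PowerSeries ℝ := mk (y ^ ·)

noncomputable def hsymmSeries (l : List ℝ) : PowerSeries ℝ := (l.map geomSeries).prod

theorem coeff_hsymmSeries (l : List ℝ) (m : ℕ) : coeff m (hsymmSeries l) = hsymm l m := by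
  rw [hsymmSeries, ← Fin.prod_univ_fun_getElem, coeff_prod, hsymm]
  refine sum_nbij' (⇑) Finsupp.equivFunOnFinite.symm ?_ ?_ ?_ ?_ ?_
  · intro f hf
    simpa [Finset.mem_finsuppAntidiag, Finset.Nat.mem_antidiagonalTuple] using hf
  · intro k hk
    simpa [Finset.mem_finsuppAntidiag, Finset.Nat.mem_antidiagonalTuple] using hk
  · intro f _; simp
  · intro k _; rfl
  · intro f _
    simp [geomSeries]

theorem hsymmSeries_cons (y : ℝ) (l : List ℝ) :
    hsymmSeries (y :: l) = geomSeries y * hsymmSeries l := by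
  simp [hsymmSeries]

theorem hsymmSeries_append_singleton (l : List ℝ) (y : ℝ) :
    hsymmSeries (l ++ [y]) = geomSeries y * hsymmSeries l := by
  simp [hsymmSeries, mul_comm]

theorem geomSeries_eq (y : ℝ) : geomSeries y = 1 + X * (C y * geomSeries y) := by
  ext (_ | n) <;> simp [geomSeries, coeff_succ_X_mul, pow_succ']

theorem derivative_geomSeries (y : ℝ) : d⁄dX ℝ (geomSeries y) = C y * geomSeries y ^ 2 := by
  ext n
  rw [coeff_derivative, coeff_C_mul, sq, coeff_mul]
  simp only [geomSeries, coeff_mk, ← pow_add]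
  rw [sum_congr rfl fun p hp => by rw [mem_antidiagonal.mp hp], sum_const, Nat.card_antidiagonal]
  simp only [nsmul_eq_mul, Nat.cast_add, Nat.cast_one]
  ring

theorem derivative_hsymmSeries (l : List ℝ) :
    d⁄dX ℝ (hsymmSeries l) = (l.map fun y => C y * geomSeries y).sum * hsymmSeries l := by
  induction l with
  | nil => simp [hsymmSeries]
  | cons y l ih =>
    rw [hsymmSeries_cons, Derivation.leibniz, ih, derivative_geomSeries]
    simp only [List.map_cons, List.sum_cons, smul_eq_mul]
    ring

theorem hsymm_zero (l : List ℝ) : hsymm l 0 = 1 := by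
  simp [hsymm, Nat.antidiagonalTuple_zero_right]

theorem hsymm_nil_succ (m : ℕ) : hsymm [] (m + 1) = 0 := by
  simp [hsymm]

theorem hsymm_singleton (y : ℝ) (m : ℕ) : hsymm [y] m = y ^ m := by
  simp [hsymm]

theorem hsymm_cons (y : ℝ) (l : List ℝ) (m : ℕ) :
    hsymm (y :: l) m = ∑ p ∈ antidiagonal m, y ^ p.1 * hsymm l p.2 := by
  simp [← coeff_hsymmSeries, hsymmSeries_cons, coeff_mul, geomSeries]

theorem hsymm_cons_succ (y : ℝ) (l : List ℝ) (m : ℕ) :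
    hsymm (y :: l) (m + 1) = y * hsymm (y :: l) m + hsymm l (m + 1) := by
  simp only [← coeff_hsymmSeries, hsymmSeries_cons]
  conv_lhs => rw [geomSeries_eq]
  rw [add_mul, one_mul, map_add, mul_assoc, coeff_succ_X_mul, mul_assoc, coeff_C_mul, add_comm]

theorem sum_mul_hsymm_append_singleton (l : List ℝ) (m : ℕ) :
    (l.map fun y => y * hsymm (l ++ [y]) m).sum = (m + 1) * hsymm l (m + 1) := by
  have h := congrArg (coeff m) (derivative_hsymmSeries l)
  rw [coeff_derivative, coeff_hsymmSeries, ← List.sum_map_mul_right, map_list_sum,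
    List.map_map] at h
  rw [mul_comm, h]
  congr 1
  refine List.map_congr_left fun y _ => ?_
  simp [← coeff_hsymmSeries, hsymmSeries_append_singleton, mul_assoc, coeff_C_mul]

theorem abs_hsymm_le {M : ℝ} (hM0 : 0 ≤ M) {l : List ℝ} (hM : ∀ y ∈ l, |y| ≤ M) (m : ℕ) :
    |hsymm l m| ≤ (2 ^ l.length * M) ^ m := by
  induction l generalizing m with
  | nil => cases m <;> simp [hsymm_zero, hsymm_nil_succ, pow_nonneg hM0]
  | cons y l ih =>
    have hterm : ∀ p ∈ antidiagonal m, |y ^ p.1 * hsymm l p.2| ≤ (2 ^ l.length * M) ^ m := by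
      intro p hp
      rw [← mem_antidiagonal.mp hp, pow_add, abs_mul, abs_pow]
      gcongr
      · exact (hM y (by simp)).trans (le_mul_of_one_le_left hM0 (one_le_pow₀ one_le_two))
      · exact ih (fun z hz => hM z (by simp [hz])) _
    calc |hsymm (y :: l) m| ≤ ∑ p ∈ antidiagonal m, |y ^ p.1 * hsymm l p.2| := by
          rw [hsymm_cons]; exact abs_sum_le_sum_abs _ _
      _ ≤ (m + 1) * (2 ^ l.length * M) ^ m := by
          simpa using sum_le_sum hterm
      _ ≤ 2 ^ m * (2 ^ l.length * M) ^ m := by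
          gcongr; exact_mod_cast Nat.lt_two_pow_self
      _ = (2 ^ (y :: l).length * M) ^ m := by
          rw [List.length_cons, pow_succ, mul_pow, mul_pow, mul_pow]; ring

/-- The `n`-th derivative at `t = 0` of `t ↦ e^{t[l]}` (see `hasSum_dde`): for `l` of length
`q + 1` it vanishes below `q` and is `h_{n-q}(l)` from `q` on. For `l = []` the truncated
subtraction gives `hsymm [] (n + 1) = 0`. -/
noncomputable def ddeCoeff (l : List ℝ) (n : ℕ) : ℝ :=
  if l.length ≤ n + 1 then hsymm l (n + 1 - l.length) else 0

theorem ddeCoeff_nil (n : ℕ) : ddeCoeff [] n = 0 := by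
  simp [ddeCoeff, hsymm_nil_succ]

theorem ddeCoeff_singleton (y : ℝ) (n : ℕ) : ddeCoeff [y] n = y ^ n := by
  simp [ddeCoeff, hsymm_singleton]

theorem ddeCoeff_cons_succ (y : ℝ) (l : List ℝ) (n : ℕ) :
    ddeCoeff (y :: l) (n + 1) = y * ddeCoeff (y :: l) n + ddeCoeff l n := by
  simp only [ddeCoeff, List.length_cons]
  obtain h | h | h : l.length ≤ n ∨ l.length = n + 1 ∨ n + 1 < l.length := by omega
  · obtain ⟨d, rfl⟩ := Nat.exists_eq_add_of_le h
    rw [if_pos (by omega), if_pos (by omega), if_pos (by omega),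
      show l.length + d + 1 + 1 - (l.length + 1) = d + 1 by omega,
      show l.length + d + 1 - (l.length + 1) = d by omega,
      show l.length + d + 1 - l.length = d + 1 by omega, hsymm_cons_succ]
  · simp [h, hsymm_zero]
  · rw [if_neg (by omega), if_neg (by omega), if_neg (by omega)]
    ring

theorem sum_mul_ddeCoeff_append_singleton (l : List ℝ) (n : ℕ) :
    (l.map fun y => y * ddeCoeff (l ++ [y]) n).sum = (n + 1 - l.length) * ddeCoeff l n := by
  simp only [ddeCoeff, List.length_append, List.length_singleton]
  obtain h | h | h : l.length ≤ n ∨ l.length = n + 1 ∨ n + 1 < l.length := by omega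
  · obtain ⟨d, rfl⟩ := Nat.exists_eq_add_of_le h
    rw [if_pos (by omega), show l.length + d + 1 - l.length = d + 1 by omega]
    simp only [show l.length + 1 ≤ l.length + d + 1 by omega, if_true,
      show l.length + d + 1 - (l.length + 1) = d by omega, sum_mul_hsymm_append_singleton]
    push_cast; ring
  · simp [h]
  · simp [show ¬ l.length ≤ n + 1 by omega, show ¬ l.length + 1 ≤ n + 1 by omega]

theorem abs_ddeCoeff_le (l : List ℝ) : ∃ C s : ℝ, ∀ n, |ddeCoeff l n| ≤ C * s ^ n := by
  set M := (l.map abs).sum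
  have hM0 : 0 ≤ M := List.sum_nonneg (by simp)
  have hM : ∀ y ∈ l, |y| ≤ M := fun y hy =>
    List.single_le_sum (by simp) _ (List.mem_map_of_mem hy)
  set s := max 1 (2 ^ l.length * M)
  have hs : 1 ≤ s := le_max_left _ _
  refine ⟨s, s, fun n => ?_⟩
  unfold ddeCoeff
  split_ifs with h
  · calc |hsymm l (n + 1 - l.length)| ≤ (2 ^ l.length * M) ^ (n + 1 - l.length) :=
          abs_hsymm_le hM0 hM _
      _ ≤ s ^ (n + 1 - l.length) := by gcongr; exact le_max_right _ _
      _ ≤ s ^ (n + 1) := pow_le_pow_right₀ hs (by omega)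
      _ = s * s ^ n := pow_succ' s n
  · simpa using mul_nonneg (zero_le_one.trans hs) (pow_nonneg (zero_le_one.trans hs) n)

theorem summable_mul_pow_div_factorial {c : ℕ → ℝ} {C s : ℝ} (hc : ∀ n, |c n| ≤ C * s ^ n)
    (t : ℝ) : Summable fun n => c n * t ^ n / n ! := by
  refine ((Real.summable_pow_div_factorial (|s| * |t|)).mul_left |C|).of_norm_bounded fun n => ?_
  rw [Real.norm_eq_abs, abs_div, abs_mul, abs_pow, mul_pow, Nat.abs_cast, ← mul_div_assoc,
    ← mul_assoc]
  gcongr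
  exact (hc n).trans ((le_abs_self _).trans (by rw [abs_mul, abs_pow]))

theorem hasSum_dde (t : ℝ) (l : List ℝ) :
    HasSum (fun n => ddeCoeff l n * t ^ n / n !) (dde t l) := by
  cases l with
  | nil => simp [dde, ddeCoeff_nil, hasSum_zero]
  | cons y l =>
    obtain ⟨C, s, hs⟩ := abs_ddeCoeff_le (y :: l)
    have hvanish : ∑ i ∈ range l.length, ddeCoeff (y :: l) i * t ^ i / i ! = 0 :=
      sum_eq_zero fun i hi => by simp [ddeCoeff, show ¬ l.length ≤ i from by simpa using hi]
    have hdde : dde t (y :: l) = ∑' m, ddeCoeff (y :: l) (m + l.length) * t ^ (m + l.length) /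
        (m + l.length) ! := by
      simp only [dde, List.length_cons, Nat.add_one_ne_zero, if_false, add_tsub_cancel_right]
      refine tsum_congr fun m => ?_
      simp only [ddeCoeff, List.length_cons]
      rw [if_pos (by omega), show m + l.length + 1 - (l.length + 1) = m by omega, add_comm m]
      ring
    have hshift := ((summable_nat_add_iff l.length).mpr
      (summable_mul_pow_div_factorial hs t)).hasSum
    rw [← hdde] at hshift
    simpa [hvanish] using
      (hasSum_nat_add_iff (f := fun n => ddeCoeff (y :: l) n * t ^ n / n !) l.length).mp hshift

theorem hasSum_list_sum_map {ι α : Type*} [AddCommMonoid α] [TopologicalSpace α] [ContinuousAdd α]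
    {f : ι → ℕ → α} {a : ι → α} (s : List ι) (h : ∀ i ∈ s, HasSum (f i) (a i)) :
    HasSum (fun n => (s.map (f · n)).sum) (s.map a).sum := by
  induction s with
  | nil => simp [hasSum_zero]
  | cons i s ih =>
    simpa using (h i (by simp)).add (ih fun j hj => h j (by simp [hj]))

theorem dde_nil (t : ℝ) : dde t [] = 0 := by
  simp [dde]

theorem dde_singleton (t y : ℝ) : dde t [y] = Real.exp (t * y) := by
  refine (hasSum_dde t [y]).unique ?_
  simpa [ddeCoeff_singleton, mul_pow, mul_comm, Real.exp_eq_exp_ℝ] using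
    NormedSpace.expSeries_div_hasSum_exp (t * y)

theorem sum_mul_dde_append_singleton (t y : ℝ) (l : List ℝ) :
    ((y :: l).map fun z => z * dde t (y :: l ++ [z])).sum
      = (t * y - l.length) * dde t (y :: l) + t * dde t l := by
  have hweighted : HasSum (fun n : ℕ => ((n : ℝ) - l.length) * ddeCoeff (y :: l) n * (t ^ n / n !))
      ((y :: l).map fun z => z * dde t (y :: l ++ [z])).sum := by
    have h := hasSum_list_sum_map (y :: l) fun z _ => (hasSum_dde t (y :: l ++ [z])).mul_left z
    simpa only [mul_div_assoc, ← mul_assoc, List.sum_map_mul_right,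
      sum_mul_ddeCoeff_append_singleton, List.length_cons, Nat.cast_succ,
      add_sub_add_right_eq_sub] using h
  have hderiv : HasSum (fun n : ℕ => (n : ℝ) * ddeCoeff (y :: l) n * (t ^ n / n !))
      (t * (y * dde t (y :: l) + dde t l)) := by
    rw [← hasSum_nat_add_iff' 1]
    simp only [sum_range_one, Nat.cast_zero, zero_mul, sub_zero]
    refine ((((hasSum_dde t (y :: l)).mul_left y).add (hasSum_dde t l)).mul_left t).congr_fun
      fun n => ?_
    rw [ddeCoeff_cons_succ, Nat.factorial_succ]
    push_cast
    field_simp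
    ring
  have hsplit := hderiv.sub ((hasSum_dde t (y :: l)).mul_left (l.length : ℝ))
  rw [hweighted.unique (hsplit.congr_fun fun n => by ring)]
  ring

theorem seg_zero_eq_cons (x : ℕ → ℝ) (q : ℕ) : seg x 0 q = x 0 :: seg x 1 q := by
  simp [seg, List.range_succ_eq_map, add_comm]

theorem length_seg (x : ℕ → ℝ) (a b : ℕ) : (seg x a b).length = b + 1 - a := by
  simp [seg]

theorem sum_range_eq_sum_map_seg (x : ℕ → ℝ) (q : ℕ) (f : ℝ → ℝ) :
    ∑ j ∈ range (q + 1), f (x j) = ((seg x 0 q).map f).sum := by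
  rw [Finset.sum_eq_multiset_sum, Finset.range_val, Multiset.range, Multiset.map_coe,
    Multiset.sum_coe, seg, List.map_map]
  simp only [zero_add, tsub_zero, Function.comp_def]

/-- **Closed form for the weighted, repeated-argument sum**: for every tuple `(x_0, …, x_q)`
and real `τ`, `Σ_{j=0}^{q} x_j e^{-τ[x_0,…,x_q,x_j]}` equals
`(−x_0 τ − q) e^{-τ[x_0,…,x_q]} − τ e^{-τ[x_1,…,x_q]}` when `q ≥ 1`, and
`−τ x_0 e^{-τ x_0}` when `q = 0`. -/
theorem weighted_repeatedarg_sum_closed_form (q : ℕ) (x : ℕ → ℝ) (τ : ℝ) :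
    (1 ≤ q →
      ∑ j ∈ Finset.range (q + 1), x j * dde (-τ) (seg x 0 q ++ [x j])
        = (-(x 0) * τ - q) * dde (-τ) (seg x 0 q) - τ * dde (-τ) (seg x 1 q))
    ∧ (q = 0 →
      x 0 * dde (-τ) [x 0, x 0] = -τ * x 0 * Real.exp (-τ * x 0)) := by
  refine ⟨fun _ => ?_, fun _ => ?_⟩
  · rw [sum_range_eq_sum_map_seg x q fun z => z * dde (-τ) (seg x 0 q ++ [z]), seg_zero_eq_cons,
      sum_mul_dde_append_singleton, length_seg]
    simp only [add_tsub_cancel_right]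
    ring
  · simpa [dde_nil, dde_singleton] using sum_mul_dde_append_singleton (-τ) (x 0) []
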